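/- Let γ, ε ∈ ℝ and let ξ′ = (ξ₁,ξ₂) ∈ ℝ² with ξ′ ≠ 0. Define a₊ = (1/2)Γ − i·α₃ and a₋ = (1/2)Γ + i·α₃ where Γ = diag(2γ·I₂, 2ε·I₂), and set 𝔢₁ = a₊·h₋,₁(ξ′), 𝔢₂ = a₊·h₋,₂(ξ′), 𝔢₃ = a₋·h₊,₁(ξ′), 𝔢₄ = a₋·h₊,₂(ξ′). Then the family (𝔢₁, 𝔢₂, 𝔢₃, 𝔢₄) is linearly independent in ℂ⁴ if and only if γ·ε ≠ 1. -/

import Mathlib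

open Matrix Complex

noncomputable section

/-- Pauli matrices -/
def σ1 : Matrix (Fin 2) (Fin 2) ℂ := !![0, 1; 1, 0]
def σ2 : Matrix (Fin 2) (Fin 2) ℂ := !![0, -I; I, 0]
def σ3 : Matrix (Fin 2) (Fin 2) ℂ := !![1, 0; 0, -1]

/-- The Dirac matrix `α₃`, as a 4×4 block matrix indexed by `Fin 2 ⊕ Fin 2`. -/
def α3 : Matrix (Fin 2 ⊕ Fin 2) (Fin 2 ⊕ Fin 2) ℂ := Matrix.fromBlocks 0 σ3 σ3 0

/-- `Λ₊(ξ′) = ξ₁σ₁ + ξ₂σ₂ + i|ξ′|σ₃`. -/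
def Λp (ξ₁ ξ₂ : ℝ) : Matrix (Fin 2) (Fin 2) ℂ :=
  (ξ₁ : ℂ) • σ1 + (ξ₂ : ℂ) • σ2 + (I * (Real.sqrt (ξ₁ ^ 2 + ξ₂ ^ 2) : ℝ)) • σ3

/-- `Λ₋(ξ′) = ξ₁σ₁ + ξ₂σ₂ − i|ξ′|σ₃`. -/
def Λm (ξ₁ ξ₂ : ℝ) : Matrix (Fin 2) (Fin 2) ℂ :=
  (ξ₁ : ℂ) • σ1 + (ξ₂ : ℂ) • σ2 - (I * (Real.sqrt (ξ₁ ^ 2 + ξ₂ ^ 2) : ℝ)) • σ3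

/-- `e = (1,0) ∈ ℂ²`. -/
def e : Fin 2 → ℂ := ![1, 0]

/-- `h₊,₁, h₊,₂, h₋,₁, h₋,₂ ∈ ℂ⁴`. -/
def hp1 (ξ₁ ξ₂ : ℝ) : (Fin 2 ⊕ Fin 2) → ℂ := Sum.elim ((Λp ξ₁ ξ₂).mulVec e) 0
def hp2 (ξ₁ ξ₂ : ℝ) : (Fin 2 ⊕ Fin 2) → ℂ := Sum.elim 0 ((Λp ξ₁ ξ₂).mulVec e)
def hm1 (ξ₁ ξ₂ : ℝ) : (Fin 2 ⊕ Fin 2) → ℂ := Sum.elim ((Λm ξ₁ ξ₂).mulVec e) 0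
def hm2 (ξ₁ ξ₂ : ℝ) : (Fin 2 ⊕ Fin 2) → ℂ := Sum.elim 0 ((Λm ξ₁ ξ₂).mulVec e)

/-- The interaction matrix `Γ = diag(2γ·I₂, 2ε·I₂)`. -/
def Γmat (γ ε : ℝ) : Matrix (Fin 2 ⊕ Fin 2) (Fin 2 ⊕ Fin 2) ℂ :=
  Matrix.fromBlocks ((2 * γ : ℝ) • 1) 0 0 ((2 * ε : ℝ) • 1)

/-- `a₊ = (1/2)Γ − i·α₃`. -/
def aP (γ ε : ℝ) : Matrix (Fin 2 ⊕ Fin 2) (Fin 2 ⊕ Fin 2) ℂ :=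
  (1 / 2 : ℂ) • Γmat γ ε - I • α3

/-- `a₋ = (1/2)Γ + i·α₃`. -/
def aM (γ ε : ℝ) : Matrix (Fin 2 ⊕ Fin 2) (Fin 2 ⊕ Fin 2) ℂ :=
  (1 / 2 : ℂ) • Γmat γ ε + I • α3

/-! Write `u = Λ₊(ξ′)e` and `v = Λ₋(ξ′)e`. Since `σ₃` anticommutes with `σ₁, σ₂` and fixes `e`,
`σ₃u = -v` and `σ₃v = -u`; hence each `𝔢ₖ` has constant coordinates, depending only on `γ` and `ε`,
in the family `(u,0), (v,0), (0,u), (0,v)`. For `ξ′ ≠ 0` the vectors `u, v` are independent, so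
this family is a basis, and the coefficient matrix has determinant `-(γε - 1)²`. -/

theorem LinearIndependent.sum_smul_iff {ι κ R M : Type*} [Fintype ι] [CommRing R]
    [AddCommGroup M] [Module R M] {w : ι → M} (hw : LinearIndependent R w) (C : Matrix κ ι R) :
    LinearIndependent R (fun k ↦ ∑ j, C k j • w j) ↔ LinearIndependent R C.row :=
  (Fintype.linearCombination R w).linearIndependent_iff
    (LinearMap.ker_eq_bot.mpr hw.fintypeLinearCombination_injective)

theorem LinearIndependent.sumElim_blocks {ι R : Type*} [CommRing R] {u v : ι → R}
    (huv : LinearIndependent R ![u, v]) :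
    LinearIndependent R ![Sum.elim u 0, Sum.elim v 0, Sum.elim 0 u, Sum.elim 0 v] := by
  rw [Fintype.linearIndependent_iff]
  intro g hg
  have hl : g 0 • u + g 1 • v = 0 :=
    funext fun i ↦ by simpa [Fin.sum_univ_four] using congrFun hg (.inl i)
  have hr : g 2 • u + g 3 • v = 0 :=
    funext fun i ↦ by simpa [Fin.sum_univ_four] using congrFun hg (.inr i)
  obtain ⟨h0, h1⟩ := LinearIndependent.pair_iff.mp huv _ _ hl
  obtain ⟨h2, h3⟩ := LinearIndependent.pair_iff.mp huv _ _ hr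
  intro i
  fin_cases i <;> assumption

section Lopatinsky

variable (γ ε ξ₁ ξ₂ : ℝ)

lemma Λp_mulVec_e : Λp ξ₁ ξ₂ *ᵥ e = ![I * √(ξ₁ ^ 2 + ξ₂ ^ 2), ξ₁ + ξ₂ * I] := by
  ext i
  fin_cases i <;> simp [Λp, σ1, σ2, σ3, e, mulVec, dotProduct]

lemma Λm_mulVec_e : Λm ξ₁ ξ₂ *ᵥ e = ![-(I * √(ξ₁ ^ 2 + ξ₂ ^ 2)), ξ₁ + ξ₂ * I] := by
  ext i
  fin_cases i <;> simp [Λm, σ1, σ2, σ3, e, mulVec, dotProduct]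

lemma σ3_mulVec_cons (a b : ℂ) : σ3 *ᵥ ![a, b] = ![a, -b] := by
  ext i
  fin_cases i <;> simp [σ3, mulVec, dotProduct]

lemma σ3_mulVec_Λp_mulVec_e : σ3 *ᵥ (Λp ξ₁ ξ₂ *ᵥ e) = -(Λm ξ₁ ξ₂ *ᵥ e) := by
  rw [Λp_mulVec_e, Λm_mulVec_e, σ3_mulVec_cons]
  ext i
  fin_cases i <;> simp

lemma σ3_mulVec_Λm_mulVec_e : σ3 *ᵥ (Λm ξ₁ ξ₂ *ᵥ e) = -(Λp ξ₁ ξ₂ *ᵥ e) := by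
  rw [Λp_mulVec_e, Λm_mulVec_e, σ3_mulVec_cons]
  ext i
  fin_cases i <;> simp

lemma linearIndependent_Λp_mulVec_e_Λm_mulVec_e (hξ : ¬(ξ₁ = 0 ∧ ξ₂ = 0)) :
    LinearIndependent ℂ ![Λp ξ₁ ξ₂ *ᵥ e, Λm ξ₁ ξ₂ *ᵥ e] := by
  have hR : (√(ξ₁ ^ 2 + ξ₂ ^ 2) : ℂ) ≠ 0 := by
    have : 0 < ξ₁ ^ 2 + ξ₂ ^ 2 := by
      rcases not_and_or.mp hξ with h | h <;> positivity
    exact_mod_cast (Real.sqrt_pos.mpr this).ne'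
  have hw : (ξ₁ + ξ₂ * I : ℂ) ≠ 0 := fun h ↦
    hξ ⟨by simpa using congrArg re h, by simpa using congrArg im h⟩
  rw [LinearIndependent.pair_iff]
  intro s t hst
  rw [Λp_mulVec_e, Λm_mulVec_e] at hst
  have h0 := congrFun hst 0
  have h1 := congrFun hst 1
  simp only [smul_cons, smul_eq_mul, smul_empty, mul_neg, Pi.add_apply, Pi.zero_apply,
    cons_val_zero, cons_val_one, cons_val_fin_one] at h0 h1
  have hdiff : s - t = 0 := by
    have : I * √(ξ₁ ^ 2 + ξ₂ ^ 2) * (s - t) = 0 := by linear_combination h0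
    simpa [I_ne_zero, hR] using this
  have hsum : s + t = 0 := by
    have : (ξ₁ + ξ₂ * I) * (s + t) = 0 := by linear_combination h1
    simpa [hw] using this
  constructor
  · linear_combination (hdiff + hsum) / 2
  · linear_combination (hsum - hdiff) / 2

lemma aP_mulVec_sumElim (x y : Fin 2 → ℂ) :
    aP γ ε *ᵥ Sum.elim x y = Sum.elim ((γ : ℂ) • x - I • σ3 *ᵥ y) ((ε : ℂ) • y - I • σ3 *ᵥ x) := by
  ext (i | i) <;> fin_cases i <;>
    simp [aP, Γmat, α3, σ3, mulVec, dotProduct, fromBlocks, vecHead, vecTail] <;> ring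

lemma aM_mulVec_sumElim (x y : Fin 2 → ℂ) :
    aM γ ε *ᵥ Sum.elim x y = Sum.elim ((γ : ℂ) • x + I • σ3 *ᵥ y) ((ε : ℂ) • y + I • σ3 *ᵥ x) := by
  ext (i | i) <;> fin_cases i <;>
    simp [aM, Γmat, α3, σ3, mulVec, dotProduct, fromBlocks, vecHead, vecTail] <;> ring

lemma aP_mulVec_hm1 :
    aP γ ε *ᵥ hm1 ξ₁ ξ₂ = Sum.elim ((γ : ℂ) • (Λm ξ₁ ξ₂ *ᵥ e)) (I • (Λp ξ₁ ξ₂ *ᵥ e)) := by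
  rw [hm1, aP_mulVec_sumElim, mulVec_zero, σ3_mulVec_Λm_mulVec_e]
  simp only [smul_zero, smul_neg, sub_zero, zero_sub, neg_neg]

lemma aP_mulVec_hm2 :
    aP γ ε *ᵥ hm2 ξ₁ ξ₂ = Sum.elim (I • (Λp ξ₁ ξ₂ *ᵥ e)) ((ε : ℂ) • (Λm ξ₁ ξ₂ *ᵥ e)) := by
  rw [hm2, aP_mulVec_sumElim, mulVec_zero, σ3_mulVec_Λm_mulVec_e]
  simp only [smul_zero, smul_neg, sub_zero, zero_sub, neg_neg]

lemma aM_mulVec_hp1 :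
    aM γ ε *ᵥ hp1 ξ₁ ξ₂ = Sum.elim ((γ : ℂ) • (Λp ξ₁ ξ₂ *ᵥ e)) (-(I • (Λm ξ₁ ξ₂ *ᵥ e))) := by
  rw [hp1, aM_mulVec_sumElim, mulVec_zero, σ3_mulVec_Λp_mulVec_e]
  simp only [smul_zero, smul_neg, add_zero, zero_add]

lemma aM_mulVec_hp2 :
    aM γ ε *ᵥ hp2 ξ₁ ξ₂ = Sum.elim (-(I • (Λm ξ₁ ξ₂ *ᵥ e))) ((ε : ℂ) • (Λp ξ₁ ξ₂ *ᵥ e)) := by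
  rw [hp2, aM_mulVec_sumElim, mulVec_zero, σ3_mulVec_Λp_mulVec_e]
  simp only [smul_zero, smul_neg, add_zero, zero_add]

def lopatinskyMatrix (γ ε : ℂ) : Matrix (Fin 4) (Fin 4) ℂ :=
  !![0, γ, I, 0; I, 0, 0, ε; γ, 0, 0, -I; 0, -I, ε, 0]

lemma det_lopatinskyMatrix (γ ε : ℂ) : (lopatinskyMatrix γ ε).det = -(γ * ε - 1) ^ 2 := by
  simp [lopatinskyMatrix, det_succ_row_zero, Fin.sum_univ_succ, Fin.succAbove]
  linear_combination (1 - 2 * γ * ε) * I_mul_I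

lemma lopatinsky_family_eq :
    ![aP γ ε *ᵥ hm1 ξ₁ ξ₂, aP γ ε *ᵥ hm2 ξ₁ ξ₂, aM γ ε *ᵥ hp1 ξ₁ ξ₂, aM γ ε *ᵥ hp2 ξ₁ ξ₂] =
      fun k ↦ ∑ j, lopatinskyMatrix γ ε k j •
        ![Sum.elim (Λp ξ₁ ξ₂ *ᵥ e) 0, Sum.elim (Λm ξ₁ ξ₂ *ᵥ e) 0,
          Sum.elim 0 (Λp ξ₁ ξ₂ *ᵥ e), Sum.elim 0 (Λm ξ₁ ξ₂ *ᵥ e)] j := by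
  rw [aP_mulVec_hm1, aP_mulVec_hm2, aM_mulVec_hp1, aM_mulVec_hp2]
  generalize Λp ξ₁ ξ₂ *ᵥ e = u
  generalize Λm ξ₁ ξ₂ *ᵥ e = v
  ext k (i | i) <;> fin_cases k <;> simp [lopatinskyMatrix, Fin.sum_univ_four]

end Lopatinsky

/-- Lopatinsky–Shapiro condition: for `ξ′ ≠ 0`, the family
`(𝔢₁, 𝔢₂, 𝔢₃, 𝔢₄)` is linearly independent in `ℂ⁴` iff `γ·ε ≠ 1`. -/
theorem lopatinsky_shapiro_iff (γ ε ξ₁ ξ₂ : ℝ) (hξ : ¬(ξ₁ = 0 ∧ ξ₂ = 0)) :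
    LinearIndependent ℂ
        ![(aP γ ε).mulVec (hm1 ξ₁ ξ₂), (aP γ ε).mulVec (hm2 ξ₁ ξ₂),
          (aM γ ε).mulVec (hp1 ξ₁ ξ₂), (aM γ ε).mulVec (hp2 ξ₁ ξ₂)]
      ↔ γ * ε ≠ 1 := by
  rw [lopatinsky_family_eq,
    (linearIndependent_Λp_mulVec_e_Λm_mulVec_e ξ₁ ξ₂ hξ).sumElim_blocks.sum_smul_iff,
    linearIndependent_rows_iff_isUnit, isUnit_iff_isUnit_det, isUnit_iff_ne_zero,
    det_lopatinskyMatrix, neg_ne_zero, pow_ne_zero_iff two_ne_zero, sub_ne_zero]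
  exact_mod_cast Iff.rfl
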